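/- arXiv:2503.02148 — 2 statements merged into one kernel-verified Lean document; each statement's English description precedes it below -/
import Mathlib

section
/- Let R be a (not necessarily unital) ring and [R,R] the ideal generated by all additive commutators pr − rp. Then [R,R] equals the additive subgroup of R generated by elements of the form s − t where s,t ∈ R and s ∼_s^1 t (with ∼_s^1 taken in the multiplicative semigroup of R). -/
/-!
Modulo the ideal `I` generated by the commutators the multiplicative semigroup of `R` becomes
commutative, so permuting the factors of a product does not change its class: `s - t ∈ I`
whenever `s ∼ₛ¹ t`. Conversely `pr - rp` is such a difference. Finally the set of differences
`s - t` with `s ∼ₛ¹ t` is absorbing (multiply both `s` and `t` by the same factor), so the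
additive subgroup it generates is already a two-sided ideal.
-/

/-- `s ∼ₛ¹ t`: `s = p₁⋯pₙ` and `t = p_{f(1)}⋯p_{f(n)}` for some `p_i ∈ S¹` and a
permutation `f` of `{1,…,n}` (encoded as a list permutation). -/
def SimS1 {S : Type*} [Semigroup S] (s t : S) : Prop :=
  ∃ l l' : List (WithOne S), l.Perm l' ∧ (s : WithOne S) = l.prod ∧ (t : WithOne S) = l'.prod

/-- `∼ₛ`: the transitive closure of `∼ₛ¹`. -/
def SimS {S : Type*} [Semigroup S] : S → S → Prop := Relation.TransGen SimS1

namespace SimS1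

variable {S : Type*} [Semigroup S]

theorem of_mul_comm (a b : S) : SimS1 (a * b) (b * a) :=
  ⟨[(a : WithOne S), b], [(b : WithOne S), a], .swap _ _ _, by simp, by simp⟩

theorem mul_left (a : S) {s t : S} (h : SimS1 s t) : SimS1 (a * s) (a * t) := by
  obtain ⟨l, l', hl, hs, ht⟩ := h
  exact ⟨(a : WithOne S) :: l, (a : WithOne S) :: l', hl.cons _, by simp [hs], by simp [ht]⟩

theorem mul_right (a : S) {s t : S} (h : SimS1 s t) : SimS1 (s * a) (t * a) := by
  obtain ⟨l, l', hl, hs, ht⟩ := h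
  exact ⟨l ++ [(a : WithOne S)], l' ++ [(a : WithOne S)], hl.append_right _,
    by simp [hs], by simp [ht]⟩

theorem map_eq {T : Type*} [CommSemigroup T] (f : S →ₙ* T) {s t : S} (h : SimS1 s t) :
    f s = f t := by
  obtain ⟨l, l', hl, hs, ht⟩ := h
  apply WithOne.coe_injective
  calc (f s : WithOne T) = (l.map (WithOne.mapMulHom f)).prod := by
        rw [← WithOne.mapMulHom_coe, hs, map_list_prod]
    _ = (l'.map (WithOne.mapMulHom f)).prod := (hl.map _).prod_eq
    _ = f t := by rw [← WithOne.mapMulHom_coe, ht, map_list_prod]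

theorem con_rel (c : Con S) (hc : ∀ a b : S, c (a * b) (b * a)) {s t : S} (h : SimS1 s t) :
    c s t := by
  let _ : CommSemigroup c.Quotient :=
    { mul_comm := fun x y => Con.induction_on₂ x y fun a b => c.eq.mpr (hc a b) }
  exact c.eq.mp (h.map_eq c.mkMulHom)

theorem sub_mem {R : Type*} [NonUnitalRing R] (I : TwoSidedIdeal R)
    (hI : ∀ p r : R, p * r - r * p ∈ I) {s t : R} (h : SimS1 s t) : s - t ∈ I := by
  rw [← TwoSidedIdeal.rel_iff]
  exact h.con_rel I.ringCon.toCon fun a b => (I.rel_iff _ _).mpr (hI a b)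

end SimS1

/-- For a (not necessarily unital) ring `R`, the two-sided ideal generated by the additive
commutators `pr - rp` equals the additive subgroup generated by elements `s - t` with
`s ∼ₛ¹ t` in the multiplicative semigroup of `R`. -/
theorem commutator_ideal_eq_simS1_addSubgroup {R : Type*} [NonUnitalRing R] :
    (TwoSidedIdeal.span {x : R | ∃ p r : R, x = p * r - r * p} : Set R) =
      (AddSubgroup.closure {x : R | ∃ s t : R, SimS1 s t ∧ x = s - t} : Set R) := by
  set commutators := {x : R | ∃ p r : R, x = p * r - r * p}
  set differences := {x : R | ∃ s t : R, SimS1 s t ∧ x = s - t}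
  have hspan : TwoSidedIdeal.span commutators = TwoSidedIdeal.span differences := by
    apply le_antisymm <;> rw [TwoSidedIdeal.span_le]
    · rintro _ ⟨p, r, rfl⟩
      exact TwoSidedIdeal.subset_span ⟨p * r, r * p, SimS1.of_mul_comm p r, rfl⟩
    · rintro _ ⟨s, t, h, rfl⟩
      exact h.sub_mem _ fun p r => TwoSidedIdeal.subset_span (s := commutators) ⟨p, r, rfl⟩
  ext z
  rw [SetLike.mem_coe, hspan, SetLike.mem_coe]
  refine TwoSidedIdeal.mem_span_iff_mem_addSubgroup_closure_absorbing ?_ ?_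
  · rintro a _ ⟨s, t, h, rfl⟩
    exact ⟨a * s, a * t, h.mul_left a, mul_sub a s t⟩
  · rintro _ a ⟨s, t, h, rfl⟩
    exact ⟨s * a, t * a, h.mul_right a, sub_mul s t a⟩
end

section
/- Let S be a group and T a subgroup of S. Then the closure T̄ of T under ∼_s is the (normal) subgroup of S generated by T and the commutator subgroup [S,S]. -/
/-!
`∼ₛ` is a congruence (append a common factor to both lists of a witness), every commutative
image of `S` identifies `∼ₛ`-related elements, and `ab ∼ₛ ba` makes `S/∼ₛ` commutative. Hence in
a group `∼ₛ` is the kernel congruence of the abelianization, and the `∼ₛ`-closure of `T` is the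
preimage of the image of `T` in `S/[S,S]`, namely `T[S,S]`.
-/

section Semigroup

variable {S : Type*} [Semigroup S]

theorem SimS1.refl (s : S) : SimS1 s s :=
  ⟨[(s : WithOne S)], [(s : WithOne S)], List.Perm.refl _, by simp, by simp⟩

theorem SimS1.symm {s t : S} (h : SimS1 s t) : SimS1 t s := by
  obtain ⟨l, l', hp, hs, ht⟩ := h
  exact ⟨l', l, hp.symm, ht, hs⟩

theorem SimS1.mul_right_s14 {s t : S} (h : SimS1 s t) (u : S) : SimS1 (s * u) (t * u) := by
  obtain ⟨l, l', hp, hs, ht⟩ := h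
  refine ⟨l ++ [(u : WithOne S)], l' ++ [(u : WithOne S)], hp.append_right _, ?_, ?_⟩ <;>
    simp [List.prod_append, hs, ht]

theorem SimS1.mul_left_s14 {s t : S} (h : SimS1 s t) (u : S) : SimS1 (u * s) (u * t) := by
  obtain ⟨l, l', hp, hs, ht⟩ := h
  refine ⟨(u : WithOne S) :: l, (u : WithOne S) :: l', hp.cons _, ?_, ?_⟩ <;>
    simp [hs, ht]

theorem SimS1.mul_comm (a b : S) : SimS1 (a * b) (b * a) :=
  ⟨[(a : WithOne S), b], [(b : WithOne S), a], List.Perm.swap _ _ _, by simp, by simp⟩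

theorem SimS1.map_eq_s14 {M : Type*} [CommMonoid M] (f : S →ₙ* M) {s t : S} (h : SimS1 s t) :
    f s = f t := by
  obtain ⟨l, l', hp, hs, ht⟩ := h
  have key : WithOne.lift f s = WithOne.lift f t := by
    rw [hs, ht, map_list_prod, map_list_prod]
    exact (hp.map _).prod_eq
  simpa using key

theorem SimS.map_eq_s14 {M : Type*} [CommMonoid M] (f : S →ₙ* M) {s t : S} (h : SimS s t) :
    f s = f t := by
  induction h with
  | single h => exact h.map_eq_s14 f
  | tail _ h ih => exact ih.trans (h.map_eq_s14 f)

theorem SimS.symm {s t : S} (h : SimS s t) : SimS t s := by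
  induction h with
  | single h => exact .single h.symm
  | tail _ h ih => exact .head h.symm ih

variable (S) in
def simSCon : Con S where
  r := SimS
  iseqv := ⟨fun s => .single (SimS1.refl s), SimS.symm, Relation.TransGen.trans⟩
  mul' {_ b c _} hab hcd :=
    (hab.lift (· * c) fun _ _ h => h.mul_right_s14 c).trans
      (hcd.lift (b * ·) fun _ _ h => h.mul_left_s14 b)

end Semigroup

instance simSCon.instCommGroupQuotient {S : Type*} [Group S] :
    CommGroup (simSCon S).Quotient where
  mul_comm := Quotient.ind₂ fun a b => (simSCon S).eq.2 (.single (SimS1.mul_comm a b))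

theorem simS_iff_abelianization_of_eq {S : Type*} [Group S] {s t : S} :
    SimS s t ↔ Abelianization.of s = Abelianization.of t := by
  refine ⟨SimS.map_eq_s14 Abelianization.of.toMulHom, fun h => ?_⟩
  have := congrArg (Abelianization.lift (simSCon S).mk') h
  rw [Abelianization.lift_apply_of, Abelianization.lift_apply_of] at this
  exact (simSCon S).eq.1 this

/-- In a group `S`, the `∼ₛ`-closure of a subgroup `T` is the subgroup generated by
`T` and the commutator subgroup `[S,S]`. -/
theorem simS_closure_subgroup {S : Type*} [Group S] (T : Subgroup S) :
    {s : S | ∃ t ∈ T, SimS s t} = (T ⊔ commutator S : Subgroup S) := by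
  ext s
  rw [← Abelianization.ker_of, ← Subgroup.comap_map_eq]
  simp [simS_iff_abelianization_of_eq, eq_comm]
end
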